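/- arXiv:1603.03219 — 2 statements merged into one kernel-verified Lean document; each statement's English description precedes it below -/
import Mathlib

section
/- Let g ≥ 2 and define σ : ℂ → ℝ by σ(x) = Σ_{i=0}^{g−1} |x|^(2i). Then (∂²σ/∂x∂\bar x)·σ − (∂σ/∂x)·(∂σ/∂\bar x) > 0 at every point x ∈ ℂ. -/
open Finset

/-- Directional derivative along the real axis. -/
noncomputable def dre (f : ℂ → ℂ) (z : ℂ) : ℂ := deriv (fun t : ℝ => f (z + (t : ℂ))) 0

/-- Directional derivative along the imaginary axis. -/
noncomputable def dim (f : ℂ → ℂ) (z : ℂ) : ℂ :=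
  deriv (fun t : ℝ => f (z + (t : ℂ) * Complex.I)) 0

/-- The Wirtinger derivative ∂/∂z = (1/2)(∂/∂u − i ∂/∂v). -/
noncomputable def wdz (f : ℂ → ℂ) (z : ℂ) : ℂ := (dre f z - Complex.I * dim f z) / 2

/-- The Wirtinger derivative ∂/∂z̄ = (1/2)(∂/∂u + i ∂/∂v). -/
noncomputable def wdzbar (f : ℂ → ℂ) (z : ℂ) : ℂ := (dre f z + Complex.I * dim f z) / 2

/-! Writing `σ w = φ (w * conj w)` with `φ u = ∑ i < g, uⁱ`, the Wirtinger chain rule gives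
`∂̄σ = x φ'(r)`, `∂σ = x̄ φ'(r)` and `∂∂̄σ = (u φ')'(r) = ∑ (i + 1)² rⁱ =: E` at `r = |x|²`.
With `D = φ'(r) = ∑ (i + 1) rⁱ` and `φ(r) = 1 + r T`, `T = ∑ i < g - 1, rⁱ`, the quantity equals
`E (1 + r T) - r D² = E + r (E T - D²)`, and Cauchy–Schwarz gives `D² ≤ E T`, while `E ≥ 1`
because `g ≥ 2`. -/

open Complex ComplexConjugate

section Wirtinger

variable {F : ℂ × ℂ → ℂ} {L : ℂ × ℂ →L[ℂ] ℂ} {z : ℂ}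

theorem dre_eq_of_hasFDerivAt (hF : HasFDerivAt F L (z, conj z)) :
    dre (fun w => F (w, conj w)) z = L (1, 0) + L (0, 1) := by
  have hγ : HasDerivAt (fun t : ℝ => (z + t, conj z + t)) ((1 : ℂ), (1 : ℂ)) 0 :=
    (((hasDerivAt_id (0 : ℂ)).const_add z).comp_ofReal).prodMk
      ((hasDerivAt_id (0 : ℂ)).const_add (conj z)).comp_ofReal
  have := (hF.restrictScalars ℝ).comp_hasDerivAt_of_eq (0 : ℝ) hγ (by simp)
  rw [← map_add]
  simpa [dre, Function.comp_def] using this.deriv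

theorem dim_eq_of_hasFDerivAt (hF : HasFDerivAt F L (z, conj z)) :
    dim (fun w => F (w, conj w)) z = I * (L (1, 0) - L (0, 1)) := by
  have hγ : HasDerivAt (fun t : ℝ => (z + t * I, conj z - t * I)) (I, -I) 0 := by
    have h := (hasDerivAt_id (0 : ℂ)).mul_const I
    simpa using ((h.const_add z).comp_ofReal).prodMk (h.const_sub (conj z)).comp_ofReal
  have := (hF.restrictScalars ℝ).comp_hasDerivAt_of_eq (0 : ℝ) hγ (by simp)
  rw [← smul_eq_mul, ← map_sub, ← map_smul]
  simpa [dim, Function.comp_def, sub_eq_add_neg] using this.deriv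

theorem wdz_eq_of_hasFDerivAt (hF : HasFDerivAt F L (z, conj z)) :
    wdz (fun w => F (w, conj w)) z = L (1, 0) := by
  rw [wdz, dre_eq_of_hasFDerivAt hF, dim_eq_of_hasFDerivAt hF]
  linear_combination -(L (1, 0) - L (0, 1)) / 2 * I_mul_I

theorem wdzbar_eq_of_hasFDerivAt (hF : HasFDerivAt F L (z, conj z)) :
    wdzbar (fun w => F (w, conj w)) z = L (0, 1) := by
  rw [wdzbar, dre_eq_of_hasFDerivAt hF, dim_eq_of_hasFDerivAt hF]
  linear_combination (L (1, 0) - L (0, 1)) / 2 * I_mul_I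

end Wirtinger

section Radial

variable {φ : ℂ → ℂ} {φ' z : ℂ}

theorem hasFDerivAt_comp_fst_mul_snd (h : HasDerivAt φ φ' (z * conj z)) :
    HasFDerivAt (fun p : ℂ × ℂ => φ (p.1 * p.2))
      (φ' • (z • ContinuousLinearMap.snd ℂ ℂ ℂ + conj z • ContinuousLinearMap.fst ℂ ℂ ℂ))
      (z, conj z) := by
  have hmul := (hasFDerivAt_fst (p := (z, conj z)) (𝕜 := ℂ)).fun_mul hasFDerivAt_snd
  exact h.comp_hasFDerivAt (z, conj z) hmul

theorem wdz_comp_mul_conj (h : HasDerivAt φ φ' (z * conj z)) :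
    wdz (fun w => φ (w * conj w)) z = conj z * φ' := by
  rw [wdz_eq_of_hasFDerivAt (F := fun p => φ (p.1 * p.2)) (hasFDerivAt_comp_fst_mul_snd h)]
  simp [mul_comm]

theorem wdzbar_comp_mul_conj (h : HasDerivAt φ φ' (z * conj z)) :
    wdzbar (fun w => φ (w * conj w)) z = z * φ' := by
  rw [wdzbar_eq_of_hasFDerivAt (F := fun p => φ (p.1 * p.2)) (hasFDerivAt_comp_fst_mul_snd h)]
  simp [mul_comm]

theorem wdz_mul_comp_mul_conj (h : HasDerivAt φ φ' (z * conj z)) :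
    wdz (fun w => w * φ (w * conj w)) z = φ (z * conj z) + z * conj z * φ' := by
  have hF := (hasFDerivAt_fst (p := (z, conj z))).fun_mul (hasFDerivAt_comp_fst_mul_snd h)
  rw [wdz_eq_of_hasFDerivAt (F := fun p => p.1 * φ (p.1 * p.2)) hF]
  simp only [smul_add, add_apply, smul_apply, ContinuousLinearMap.coe_snd', smul_eq_mul,
    mul_zero, ContinuousLinearMap.coe_fst', mul_one, zero_add]
  ring

end Radial

section PowerSums

variable {𝕜 : Type*} [NontriviallyNormedField 𝕜] (n : ℕ) (u : 𝕜)

theorem hasDerivAt_geom_sum :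
    HasDerivAt (fun u => ∑ i ∈ range (n + 1), u ^ i) (∑ i ∈ range n, ((i : 𝕜) + 1) * u ^ i) u := by
  have h := HasDerivAt.fun_sum (u := range (n + 1)) fun i _ => hasDerivAt_pow i u
  rw [sum_range_succ'] at h
  simpa using h

theorem hasDerivAt_sum_succ_mul_pow :
    HasDerivAt (fun u => ∑ i ∈ range n, ((i : 𝕜) + 1) * u ^ i)
      (∑ i ∈ range n, ((i : 𝕜) + 1) * (i * u ^ (i - 1))) u :=
  HasDerivAt.fun_sum fun i _ => (hasDerivAt_pow i u).const_mul _

theorem sum_succ_mul_pow_add_mul_sum :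
    ∑ i ∈ range n, ((i : 𝕜) + 1) * u ^ i + u * ∑ i ∈ range n, ((i : 𝕜) + 1) * (i * u ^ (i - 1)) =
      ∑ i ∈ range n, ((i : 𝕜) + 1) ^ 2 * u ^ i := by
  rw [mul_sum, ← sum_add_distrib]
  refine sum_congr rfl fun i _ => ?_
  rcases i with _ | i
  · simp
  · push_cast; ring

end PowerSums

theorem gram_det_geom_sum_pos (n : ℕ) (hn : n ≠ 0) {r : ℝ} (hr : 0 ≤ r) :
    0 < (∑ i ∈ range n, ((i : ℝ) + 1) ^ 2 * r ^ i) * (∑ i ∈ range (n + 1), r ^ i) -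
      r * (∑ i ∈ range n, ((i : ℝ) + 1) * r ^ i) ^ 2 := by
  set E := ∑ i ∈ range n, ((i : ℝ) + 1) ^ 2 * r ^ i
  set D := ∑ i ∈ range n, ((i : ℝ) + 1) * r ^ i
  set T := ∑ i ∈ range n, r ^ i
  have hS : ∑ i ∈ range (n + 1), r ^ i = 1 + r * T := by
    rw [sum_range_succ', mul_sum]; simp only [pow_succ']; ring
  have hCS : D ^ 2 ≤ E * T :=
    sum_sq_le_sum_mul_sum_of_sq_le_mul _ (fun i _ => by positivity) (fun i _ => by positivity)
      fun i _ => le_of_eq (by ring)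
  have hE : 1 ≤ E := calc
    (1 : ℝ) = (((0 : ℕ) : ℝ) + 1) ^ 2 * r ^ 0 := by simp
    _ ≤ E := single_le_sum (f := fun i : ℕ => ((i : ℝ) + 1) ^ 2 * r ^ i)
      (fun i _ => by positivity) (mem_range.mpr (Nat.pos_of_ne_zero hn))
  calc 0 < E := by linarith
    _ ≤ E + r * (E * T - D ^ 2) := le_add_of_nonneg_right (mul_nonneg hr (by linarith))
    _ = E * (1 + r * T) - r * D ^ 2 := by ring
    _ = _ := by rw [hS]

theorem sigma_gram_det_pos (g : ℕ) (hg : 2 ≤ g) (x : ℂ) :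
    let σ : ℂ → ℂ := fun w => ∑ i ∈ range g, (w * (starRingEnd ℂ) w) ^ i
    let Q : ℂ := wdz (wdzbar σ) x * σ x - wdz σ x * wdzbar σ x
    0 < Q.re ∧ Q.im = 0 := by
  intro σ Q
  obtain ⟨n, rfl⟩ : ∃ n, g = n + 1 := ⟨g - 1, by omega⟩
  have hbar : wdzbar σ = fun w => w * ∑ i ∈ range n, ((i : ℂ) + 1) * (w * conj w) ^ i :=
    funext fun w => wdzbar_comp_mul_conj (hasDerivAt_geom_sum n _)
  have hmixed : wdz (wdzbar σ) x = ∑ i ∈ range n, ((i : ℂ) + 1) ^ 2 * (x * conj x) ^ i := by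
    rw [hbar, wdz_mul_comp_mul_conj (hasDerivAt_sum_succ_mul_pow n _),
      sum_succ_mul_pow_add_mul_sum]
  have hQ : Q = ((∑ i ∈ range n, ((i : ℝ) + 1) ^ 2 * normSq x ^ i) *
      (∑ i ∈ range (n + 1), normSq x ^ i) -
      normSq x * (∑ i ∈ range n, ((i : ℝ) + 1) * normSq x ^ i) ^ 2 : ℝ) := by
    change wdz (wdzbar σ) x * σ x - wdz σ x * wdzbar σ x = _
    rw [hmixed, wdz_comp_mul_conj (hasDerivAt_geom_sum n _),
      wdzbar_comp_mul_conj (hasDerivAt_geom_sum n _)]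
    push_cast [← mul_conj]
    ring
  rw [hQ, ofReal_re, ofReal_im]
  exact ⟨gram_det_geom_sum_pos n (by omega) (normSq_nonneg x), rfl⟩
end

section
/- Let a, d ∈ ℝ, b ∈ ℂ with a > 0 and ad − |b|² > 0, let U ⊆ ℂ be open, and let h : U → ℂ be holomorphic and nonvanishing on U. Define ρ : U → ℝ by ρ(z) = (a + b\bar z + \bar b z + d|z|²)/|h(z)| and u : U → ℝ by u(z) = log(2(ad−|b|²)·|h(z)|/(a + b\bar z + \bar b z + d|z|²)³). Then at every z ∈ U, (4/ρ(z))·∂²u/∂z∂\bar z (z) + 6·e^{u(z)} = 0. -/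
/-!
Near a point of `U`, `u = log (2 (ad - |b|²)) + log ‖h‖ - 3 log φ`. The middle term is harmonic
since `h` is holomorphic and nonvanishing. Along the lines `z + t` and `z + t i` the form `φ`
restricts to quadratics `A + B t + d t²` with `A = φ z`, whose logarithms have second derivative
`(2 d A - B²) / A²` at `0`; the two values of `B` add up so that `Δ log φ = 4 (ad - |b|²) / φ²`.
Hence `Δ u = -12 (ad - |b|²) / φ² = -6 ρ eᵘ`.
-/

open Filter Topology ComplexConjugate InnerProductSpace
open scoped Laplacian

/-- The flat Laplacian Δ = ∂²/∂u² + ∂²/∂v² = 4·∂²/∂z∂z̄ of a function on ℂ ≅ ℝ². -/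
noncomputable def laplacian (f : ℂ → ℝ) (z : ℂ) : ℝ :=
  iteratedDeriv 2 (fun t : ℝ => f (z + (t : ℂ))) 0 +
    iteratedDeriv 2 (fun t : ℝ => f (z + (t : ℂ) * Complex.I)) 0

theorem iteratedDeriv_two_comp_add_smul {E F : Type*} [NormedAddCommGroup E] [NormedSpace ℝ E]
    [NormedAddCommGroup F] [NormedSpace ℝ F] {f : E → F} {z : E} (hf : ContDiffAt ℝ 2 f z)
    (v : E) :
    iteratedDeriv 2 (fun t : ℝ => f (z + t • v)) 0 = iteratedFDeriv ℝ 2 f z ![v, v] := by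
  have hline : ∀ t : ℝ, HasDerivAt (fun s : ℝ => z + s • v) v t := fun t => by
    simpa using ((hasDerivAt_id t).smul_const v).const_add z
  have hdiff : ∀ᶠ t in 𝓝 (0 : ℝ), DifferentiableAt ℝ f (z + t • v) := by
    have hz : ∀ᶠ w in 𝓝 z, DifferentiableAt ℝ f w :=
      (hf.eventually (by simp)).mono fun w hw => hw.differentiableAt (by norm_num)
    have ht : Tendsto (fun s : ℝ => z + s • v) (𝓝 0) (𝓝 z) := by
      simpa using (show Continuous fun s : ℝ => z + s • v by fun_prop).tendsto 0
    exact ht.eventually hz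
  have hderiv : deriv (fun t : ℝ => f (z + t • v)) =ᶠ[𝓝 0] fun t => fderiv ℝ f (z + t • v) v :=
    hdiff.mono fun t ht => (ht.hasFDerivAt.comp_hasDerivAt t (hline t)).deriv
  have hf' : DifferentiableAt ℝ (fderiv ℝ f) z :=
    (hf.fderiv_right (m := 1) le_rfl).differentiableAt (by norm_num)
  have hf'' := hf'.hasFDerivAt.comp_hasDerivAt_of_eq (0 : ℝ) (hline 0) (by simp)
  rw [iteratedDeriv_succ, iteratedDeriv_one, hderiv.deriv_eq, iteratedFDeriv_two_apply]
  simpa using (hf''.clm_apply (hasDerivAt_const 0 v)).deriv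

theorem laplacian_eq_laplacian_of_contDiffAt {f : ℂ → ℝ} {z : ℂ} (hf : ContDiffAt ℝ 2 f z) :
    laplacian f z = Δ f z := by
  have h1 := iteratedDeriv_two_comp_add_smul hf 1
  have hI := iteratedDeriv_two_comp_add_smul hf Complex.I
  simp only [Complex.real_smul, mul_one] at h1 hI
  rw [laplacian, h1, hI, InnerProductSpace.laplacian_eq_iteratedFDeriv_complexPlane]

theorem iteratedDeriv_two_log_quadratic {A B D : ℝ} (hA : A ≠ 0) :
    iteratedDeriv 2 (fun t : ℝ => Real.log (A + B * t + D * t ^ 2)) 0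
      = (2 * D * A - B ^ 2) / A ^ 2 := by
  set q : ℝ → ℝ := fun t => A + B * t + D * t ^ 2
  have hq : ∀ t, HasDerivAt q (B + 2 * D * t) t := fun t => by
    have := (((hasDerivAt_id t).const_mul B).const_add A).add ((hasDerivAt_pow 2 t).const_mul D)
    exact this.congr_deriv (by simp; ring)
  have hq0 : ∀ᶠ t in 𝓝 (0 : ℝ), q t ≠ 0 :=
    (hq 0).continuousAt.eventually_ne (by simpa [q] using hA)
  have hderiv : deriv (fun t => Real.log (q t)) =ᶠ[𝓝 0] fun t => (B + 2 * D * t) / q t :=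
    hq0.mono fun t ht => ((hq t).log ht).deriv
  have hnum : HasDerivAt (fun t : ℝ => B + 2 * D * t) (2 * D) 0 := by
    simpa using ((hasDerivAt_id (0 : ℝ)).const_mul (2 * D)).const_add B
  rw [iteratedDeriv_succ, iteratedDeriv_one, hderiv.deriv_eq,
    (hnum.fun_div (hq 0) (by simpa [q] using hA)).deriv]
  simp [q]
  ring

/-- `a + b z̄ + b̄ z + d |z|²`, the Hermitian form of `(a, b; b̄, d)` at `(1, z)`. -/
def hermitianForm (a d : ℝ) (b z : ℂ) : ℝ :=
  a + 2 * (conj b * z).re + d * Complex.normSq z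

section HermitianForm

variable {a d : ℝ} {b : ℂ}

theorem mul_hermitianForm (z : ℂ) :
    a * hermitianForm a d b z
      = Complex.normSq (a + conj b * z) + (a * d - Complex.normSq b) * Complex.normSq z := by
  simp only [hermitianForm, Complex.normSq_apply, Complex.add_re, Complex.add_im,
    Complex.mul_re, Complex.mul_im, Complex.conj_re, Complex.conj_im, Complex.ofReal_re,
    Complex.ofReal_im]
  ring

theorem hermitianForm_pos (ha : 0 < a) (hdet : 0 < a * d - Complex.normSq b) (z : ℂ) :
    0 < hermitianForm a d b z := by
  refine pos_of_mul_pos_right ?_ ha.le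
  rw [mul_hermitianForm]
  rcases eq_or_ne z 0 with rfl | hz
  · simpa using ha.ne'
  · exact add_pos_of_nonneg_of_pos (Complex.normSq_nonneg _)
      (mul_pos hdet (Complex.normSq_pos.mpr hz))

theorem hermitianForm_add_smul (z v : ℂ) (t : ℝ) :
    hermitianForm a d b (z + t • v) = hermitianForm a d b z
      + 2 * ((conj b + d * conj z) * v).re * t + d * Complex.normSq v * t ^ 2 := by
  simp only [hermitianForm, Complex.normSq_apply, Complex.add_re, Complex.add_im,
    Complex.mul_re, Complex.mul_im, Complex.conj_re, Complex.conj_im, Complex.ofReal_re,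
    Complex.ofReal_im, Complex.smul_re, Complex.smul_im, smul_eq_mul]
  ring

theorem contDiff_hermitianForm : ContDiff ℝ ⊤ (hermitianForm a d b) := by
  have hre : ContDiff ℝ ⊤ Complex.re := Complex.reCLM.contDiff
  have him : ContDiff ℝ ⊤ Complex.im := Complex.imCLM.contDiff
  have : hermitianForm a d b
      = fun z => a + 2 * (b.re * z.re + b.im * z.im) + d * (z.re * z.re + z.im * z.im) := by
    ext z
    simp [hermitianForm, Complex.normSq_apply]
  rw [this]
  fun_prop

theorem laplacian_log_hermitianForm {z : ℂ} (hz : hermitianForm a d b z ≠ 0) :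
    laplacian (fun w => Real.log (hermitianForm a d b w)) z
      = 4 * (a * d - Complex.normSq b) / hermitianForm a d b z ^ 2 := by
  have hline : ∀ v : ℂ, (fun t : ℝ => Real.log (hermitianForm a d b (z + t • v)))
      = fun t => Real.log (hermitianForm a d b z + 2 * ((conj b + d * conj z) * v).re * t
          + d * Complex.normSq v * t ^ 2) := fun v => by
    simp only [hermitianForm_add_smul]
  have h1 := hline 1
  have hI := hline Complex.I
  simp only [Complex.real_smul, mul_one] at h1 hI
  rw [laplacian, h1, hI, iteratedDeriv_two_log_quadratic hz, iteratedDeriv_two_log_quadratic hz]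
  field_simp
  simp only [hermitianForm, Complex.normSq_apply, Complex.add_re, Complex.add_im,
    Complex.mul_re, Complex.mul_im, Complex.conj_re, Complex.conj_im, Complex.ofReal_re,
    Complex.ofReal_im, Complex.I_re, Complex.I_im, Complex.one_re, Complex.one_im]
  ring

end HermitianForm

theorem laplacian_eq_of_eventuallyEq_sub_smul {u ψ L : ℂ → ℝ} {z : ℂ} {c : ℝ}
    (hψ : HarmonicAt ψ z) (hL : ContDiffAt ℝ 2 L z) (hu : u =ᶠ[𝓝 z] ψ - c • L) :
    laplacian u z = -c * laplacian L z := by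
  have hcL : ContDiffAt ℝ 2 (c • L) z := hL.const_smul c
  rw [laplacian_eq_laplacian_of_contDiffAt ((hψ.1.sub hcL).congr_of_eventuallyEq hu),
    laplacian_eq_laplacian_of_contDiffAt hL, (laplacian_congr_nhds hu).eq_of_nhds,
    hψ.1.laplacian_sub hcL, laplacian_smul c hL, hψ.2.eq_of_nhds]
  simp

theorem local_mean_field_equation (a d : ℝ) (b : ℂ)
    (ha : 0 < a) (hdet : 0 < a * d - Complex.normSq b)
    (U : Set ℂ) (hU : IsOpen U) (h : ℂ → ℂ) (hh : DifferentiableOn ℂ h U)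
    (hh0 : ∀ z ∈ U, h z ≠ 0) :
    let φ : ℂ → ℝ := fun z => a + 2 * ((starRingEnd ℂ) b * z).re + d * Complex.normSq z
    let ρ : ℂ → ℝ := fun z => φ z / ‖h z‖
    let u : ℂ → ℝ := fun z =>
      Real.log (2 * (a * d - Complex.normSq b) * ‖h z‖ / (φ z) ^ 3)
    ∀ z ∈ U, (1 / ρ z) * laplacian u z + 6 * Real.exp (u z) = 0 := by
  intro φ ρ u z hz
  have hφ : ∀ w, 0 < φ w := hermitianForm_pos ha hdet
  have hh_pos : ∀ w ∈ U, 0 < ‖h w‖ := fun w hw => norm_pos_iff.mpr (hh0 w hw)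
  have hu : u =ᶠ[𝓝 z] (fun w => Real.log (2 * (a * d - Complex.normSq b)) + Real.log ‖h w‖)
      - (3 : ℝ) • fun w => Real.log (φ w) := by
    filter_upwards [hU.mem_nhds hz] with w hw
    have hφw := hφ w
    have hhw := hh_pos w hw
    simp only [u, Pi.sub_apply, Pi.smul_apply, smul_eq_mul]
    rw [Real.log_div (by positivity) (by positivity), Real.log_mul (by positivity) (by positivity),
      Real.log_pow]
    push_cast
    ring
  have hψ : HarmonicAt (fun w => Real.log (2 * (a * d - Complex.normSq b)) + Real.log ‖h w‖) z :=
    (harmonicAt_const _).add ((hh.analyticAt (hU.mem_nhds hz)).harmonicAt_log_norm (hh0 z hz))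
  have hL : ContDiffAt ℝ 2 (fun w => Real.log (φ w)) z :=
    (contDiff_hermitianForm.contDiffAt.log (hφ z).ne').of_le le_top
  have hΔL : laplacian (fun w => Real.log (φ w)) z
      = 4 * (a * d - Complex.normSq b) / φ z ^ 2 :=
    laplacian_log_hermitianForm (hφ z).ne'
  have hΔu : laplacian u z = -12 * (a * d - Complex.normSq b) / φ z ^ 2 := by
    rw [laplacian_eq_of_eventuallyEq_sub_smul hψ hL hu, hΔL]
    ring
  have hφz := hφ z
  have hhz := hh_pos z hz
  simp only [ρ, u]
  rw [hΔu, Real.exp_log (by positivity)]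
  field_simp
  ring
end
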